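/- Let Γ be a finite nonempty set of d×d matrices over Z_max. Then the joint spectral radius ρ(Γ) = inf_{ℓ>0} min{ (1/ℓ)‖M_1⋯M_ℓ‖_∞ : M_i ∈ Γ } equals inf_{ℓ>0} min{ (1/ℓ)ρ(M_1⋯M_ℓ) : M_i ∈ Γ }, where ρ(M) is the tropical spectral radius of a single matrix. -/

import Mathlib

open Filter

/-- The tropical (max-plus) semiring ℤ ∪ {-∞}: addition is max (lattice sup),
`+` is the tropical product with `⊥` absorbing. -/
abbrev Zmax : Type := WithBot ℤ

/-- Square matrices over `Zmax`. -/
abbrev Mat (d : ℕ) : Type := Fin d → Fin d → Zmax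

/-- Tropical matrix product: `(A⊗B) i j = max_k (A i k + B k j)`. -/
def tmul {d : ℕ} (A B : Mat d) : Mat d :=
  fun i j => Finset.univ.sup fun k => A i k + B k j

/-- Maximal entry of a matrix (`-∞` for the all-`⊥` matrix). -/
def tnorm {d : ℕ} (M : Mat d) : Zmax :=
  Finset.univ.sup fun i => Finset.univ.sup fun j => M i j

/-- Product of a list of matrices (junk value, the all-`⊥` matrix, on `[]`;
only used on nonempty lists). -/
def prodL {d : ℕ} : List (Mat d) → Mat d
  | [] => fun _ _ => ⊥
  | [M] => M
  | M :: N :: L => tmul M (prodL (N :: L))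

/-- Tropical identity matrix. -/
def tId (d : ℕ) : Mat d := fun i j => if i = j then (0 : Zmax) else ⊥

/-- Tropical matrix power. -/
def tpow {d : ℕ} (M : Mat d) : ℕ → Mat d
  | 0 => tId d
  | n+1 => tmul M (tpow M n)

/-- The subsemigroup generated by a set of matrices: all nonempty finite products. -/
def semi {d : ℕ} (Γ : Set (Mat d)) : Set (Mat d) :=
  {M | ∃ L : List (Mat d), L ≠ [] ∧ (∀ N ∈ L, N ∈ Γ) ∧ prodL L = M}

/-- Embedding of `Zmax = ℤ ∪ {-∞}` into `EReal`. -/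
noncomputable def z2e (x : Zmax) : EReal :=
  WithBot.recBotCoe ⊥ (fun n : ℤ => ((n : ℝ) : EReal)) x

/-- `minNorm Γ ℓ` is the minimum over all products of `ℓ` matrices from `Γ`
of `‖M₁⋯M_ℓ‖_∞ / ℓ`, as an extended real. -/
noncomputable def minNorm {d : ℕ} (Γ : Set (Mat d)) (ℓ : ℕ) : EReal :=
  sInf {x | ∃ L : List (Mat d), L.length = ℓ ∧ (∀ N ∈ L, N ∈ Γ) ∧
    x = z2e (tnorm (prodL L)) / (ℓ : EReal)}

/-- Joint spectral radius: `inf_{ℓ>0} min{ ‖M₁⋯M_ℓ‖_∞/ℓ : Mᵢ ∈ Γ }`. -/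
noncomputable def jsr {d : ℕ} (Γ : Set (Mat d)) : EReal :=
  ⨅ (ℓ : ℕ) (_ : 0 < ℓ), minNorm Γ ℓ

/-- Weight of the cycle `c 0 → c 1 → ⋯ → c ℓ → c 0` (length `ℓ+1`),
addition of `Fin (ℓ+1)` being cyclic. -/
def cycWeight {d : ℕ} (M : Mat d) {ℓ : ℕ} (c : Fin (ℓ+1) → Fin d) : Zmax :=
  ∑ k : Fin (ℓ+1), M (c k) (c (k+1))

/-- Tropical spectral radius of a single matrix: the maximal average weight of
cycles in the graph of `M` (and `-∞` if there is no cycle of finite weight). -/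
noncomputable def rho {d : ℕ} (M : Mat d) : EReal :=
  ⨆ (ℓ : ℕ) (c : Fin (ℓ+1) → Fin d), z2e (cycWeight M c) / ((ℓ+1 : ℕ) : EReal)

/-- A critical cycle: a cycle with finite weight whose average weight is `rho M`. -/
def IsCritCycle {d : ℕ} (M : Mat d) {ℓ : ℕ} (c : Fin (ℓ+1) → Fin d) : Prop :=
  cycWeight M c ≠ ⊥ ∧ z2e (cycWeight M c) / ((ℓ+1 : ℕ) : EReal) = rho M

/-- Edges of the critical graph: edges lying on some critical cycle. -/
def critEdge {d : ℕ} (M : Mat d) (i j : Fin d) : Prop :=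
  ∃ (ℓ : ℕ) (c : Fin (ℓ+1) → Fin d) (k : Fin (ℓ+1)),
    IsCritCycle M c ∧ c k = i ∧ c (k+1) = j

/-- Vertices of the critical graph. -/
def critVertex {d : ℕ} (M : Mat d) (i : Fin d) : Prop :=
  ∃ j, critEdge M i j ∨ critEdge M j i

/-- Strongly connected components of the critical graph: maximal sets of critical
vertices that are pairwise connected by paths in the critical graph. -/
def IsSCC {d : ℕ} (M : Mat d) (S : Set (Fin d)) : Prop :=
  (∀ i ∈ S, critVertex M i) ∧
  (∀ i ∈ S, ∀ j ∈ S, Relation.ReflTransGen (critEdge M) i j) ∧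
  (∀ T : Set (Fin d), S ⊆ T → (∀ i ∈ T, critVertex M i) →
    (∀ i ∈ T, ∀ j ∈ T, Relation.ReflTransGen (critEdge M) i j) → T = S)

/-- Greatest common divisor of a set of natural numbers. -/
noncomputable def setGcd (A : Set ℕ) : ℕ :=
  sInf {g | (∀ a ∈ A, g ∣ a) ∧ ∀ h, (∀ a ∈ A, h ∣ a) → h ∣ g}

/-- Cyclicity of a strongly connected component `S` of the critical graph of `M`:
the gcd of the lengths of the cycles of the critical graph lying in `S`. -/
noncomputable def cyclicity {d : ℕ} (M : Mat d) (S : Set (Fin d)) : ℕ :=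
  setGcd {n | ∃ (ℓ : ℕ) (c : Fin (ℓ+1) → Fin d), n = ℓ + 1 ∧
    (∀ k, critEdge M (c k) (c (k+1))) ∧ (∀ k, c k ∈ S)}

/-- Ultimate rank of a matrix: the sum of the cyclicities of the strongly
connected components of its critical graph. -/
noncomputable def urk {d : ℕ} (M : Mat d) : ℕ :=
  ∑ᶠ (S : Set (Fin d)) (_ : IsSCC M S), cyclicity M S

/-- `k ⊙ M`: add the integer `k` to every entry. -/
def kadd {d : ℕ} (k : ℤ) (M : Mat d) : Mat d := fun i j => (k : Zmax) + M i j

/-- Value `I M F` computed from an initial row vector, a matrix and a final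
column vector. -/
def runVal {d : ℕ} (I : Fin d → Zmax) (M : Mat d) (F : Fin d → Zmax) : Zmax :=
  Finset.univ.sup fun i => Finset.univ.sup fun j => I i + M i j + F j

/-!
A cycle has average weight at most the largest entry, so `ρ(M) ≤ ‖M‖`; this gives one inequality.
For the other, let `P` be a product of `ℓ` matrices of `Γ`. Each power `Pⁿ` is a product of `nℓ`
matrices of `Γ`, and `‖Pⁿ‖ ≤ n ρ(P) + K`: an entry of `Pⁿ` is dominated by the weight of a walk of
length `n` in the graph of `P`, and cutting out closed subwalks, each of average weight at most
`ρ(P)`, leaves a walk of length at most `d`. Hence `ρ(Γ) ≤ ‖Pⁿ‖ / (nℓ) → ρ(P) / ℓ`.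
-/

open Finset

section Embedding

@[simp] lemma z2e_bot : z2e ⊥ = ⊥ := rfl

@[simp] lemma z2e_coe (n : ℤ) : z2e (n : Zmax) = ((n : ℝ) : EReal) := rfl

lemma z2e_add (x y : Zmax) : z2e (x + y) = z2e x + z2e y := by
  induction x using WithBot.recBotCoe <;> induction y using WithBot.recBotCoe <;>
    simp [← WithBot.coe_add, ← EReal.coe_add]

lemma z2e_mono : Monotone z2e := by
  intro x y h
  induction x using WithBot.recBotCoe with
  | bot => simp
  | coe a =>
    induction y using WithBot.recBotCoe with
    | bot => simp at h
    | coe b => simpa using WithBot.coe_le_coe.mp h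

lemma z2e_le_unbotD (x : Zmax) : z2e x ≤ ((x.unbotD 0 : ℤ) : ℝ) := by
  induction x using WithBot.recBotCoe <;> simp

noncomputable def z2eHom : Zmax →+ EReal where
  toFun := z2e
  map_zero' := by simp [← WithBot.coe_zero]
  map_add' := z2e_add

lemma z2e_sum {ι : Type*} (s : Finset ι) (f : ι → Zmax) :
    z2e (∑ i ∈ s, f i) = ∑ i ∈ s, z2e (f i) :=
  map_sum z2eHom f s

lemma z2e_finset_sup {ι : Type*} (s : Finset ι) (f : ι → Zmax) :
    z2e (s.sup f) = s.sup (z2e ∘ f) :=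
  Finset.apply_sup_eq_sup_comp z2e (fun _ _ => z2e_mono.map_max) rfl

end Embedding

section TropicalAlgebra

lemma add_finset_sup {ι : Type*} (a : Zmax) (s : Finset ι) (f : ι → Zmax) :
    a + s.sup f = s.sup (a + f ·) :=
  Finset.apply_sup_eq_sup_comp (a + ·) (fun _ _ => (add_right_mono).map_max) (WithBot.add_bot a)

lemma finset_sup_add {ι : Type*} (a : Zmax) (s : Finset ι) (f : ι → Zmax) :
    s.sup f + a = s.sup (f · + a) := by
  simpa only [add_comm a] using add_finset_sup a s f

lemma tmul_assoc {d : ℕ} (A B C : Mat d) : tmul (tmul A B) C = tmul A (tmul B C) := by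
  funext i j
  simp only [tmul, finset_sup_add, add_finset_sup, add_assoc]
  exact Finset.sup_comm _ _ _

lemma tmul_tId {d : ℕ} (M : Mat d) : tmul M (tId d) = M := by
  funext i j
  refine le_antisymm (Finset.sup_le fun k _ => ?_) ?_
  · by_cases h : k = j <;> simp [tId, h]
  · calc M i j = M i j + tId d j j := by simp [tId]
      _ ≤ tmul M (tId d) i j := Finset.le_sup (f := fun k => M i k + tId d k j) (mem_univ j)

lemma tpow_one {d : ℕ} (M : Mat d) : tpow M 1 = M := tmul_tId M

lemma prodL_cons {d : ℕ} (M : Mat d) {L : List (Mat d)} (hL : L ≠ []) :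
    prodL (M :: L) = tmul M (prodL L) := by
  cases L with
  | nil => exact absurd rfl hL
  | cons _ _ => rfl

lemma prodL_append {d : ℕ} {A B : List (Mat d)} (hA : A ≠ []) (hB : B ≠ []) :
    prodL (A ++ B) = tmul (prodL A) (prodL B) := by
  induction A with
  | nil => exact absurd rfl hA
  | cons M A ih =>
    rcases eq_or_ne A [] with rfl | hA'
    · exact prodL_cons M hB
    · rw [List.cons_append, prodL_cons M (by simp [hA']), ih hA', prodL_cons M hA', tmul_assoc]

lemma prodL_flatten_replicate {d : ℕ} {L : List (Mat d)} (hL : L ≠ []) {n : ℕ} (hn : 0 < n) :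
    prodL (List.replicate n L).flatten = tpow (prodL L) n := by
  induction n, hn using Nat.le_induction with
  | base => simp [tpow_one]
  | succ n hn ih =>
    rw [List.replicate_succ, List.flatten_cons, prodL_append hL, ih]
    · rfl
    · simpa [hL] using (Nat.one_le_iff_ne_zero.mp hn)

end TropicalAlgebra

section Walks

variable {V α : Type*} [AddCommMonoid α]

def walkWeight (w : V → V → α) (p : ℕ → V) (n : ℕ) : α :=
  ∑ k ∈ range n, w (p k) (p (k + 1))

lemma walkWeight_add (w : V → V → α) (p : ℕ → V) (m n : ℕ) :
    walkWeight w p (m + n) = walkWeight w p m + walkWeight w (fun t => p (m + t)) n := by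
  simp only [walkWeight, Finset.sum_range_add, add_assoc]

lemma walkWeight_succ' (w : V → V → α) (p : ℕ → V) (n : ℕ) :
    walkWeight w p (n + 1) = w (p 0) (p 1) + walkWeight w (fun t => p (t + 1)) n := by
  simp only [walkWeight, Finset.sum_range_succ', add_comm]

lemma walkWeight_splice (w : V → V → α) (p : ℕ → V) {a δ : ℕ} (h : p a = p (a + δ)) (m : ℕ) :
    walkWeight w p (a + δ + m) =
      walkWeight w (fun t => if t ≤ a then p t else p (t + δ)) (a + m) +
        walkWeight w (fun t => p (a + t)) δ := by
  set q : ℕ → V := fun t => if t ≤ a then p t else p (t + δ)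
  have hq_init : walkWeight w q a = walkWeight w p a :=
    Finset.sum_congr rfl fun k hk => by
      have hk : k < a := Finset.mem_range.mp hk
      simp only [q, if_pos hk.le, if_pos (Nat.succ_le_of_lt hk)]
  have hq_tail : (fun t => q (a + t)) = fun t => p (a + δ + t) := by
    funext t
    rcases Nat.eq_zero_or_pos t with rfl | ht
    · simpa [q] using h
    · simp only [q, if_neg (by omega : ¬a + t ≤ a)]
      ring_nf
  rw [walkWeight_add, walkWeight_add w p a, walkWeight_add w q, hq_init, hq_tail]
  abel

variable [PartialOrder α] [IsOrderedAddMonoid α]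

lemma exists_closed_subwalk [Fintype V] (p : ℕ → V) :
    ∃ a δ, 0 < δ ∧ a + δ ≤ Fintype.card V ∧ p a = p (a + δ) := by
  obtain ⟨x, y, hxy, hp⟩ := Fintype.exists_ne_map_eq_of_card_lt
    (fun k : Fin (Fintype.card V + 1) => p k) (by simp)
  rcases lt_or_gt_of_ne (Fin.val_ne_of_ne hxy) with h | h
  · exact ⟨x, y - x, by omega, by omega, by simpa [Nat.add_sub_cancel' h.le] using hp⟩
  · exact ⟨y, x - y, by omega, by omega, by simpa [Nat.add_sub_cancel' h.le] using hp.symm⟩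

theorem walkWeight_le_of_closed [Fintype V] {w : V → V → α} {r c : α} (hc : 0 ≤ c)
    (hw : ∀ i j, w i j ≤ r + c)
    (hclosed : ∀ q : ℕ → V, ∀ δ, 0 < δ → q δ = q 0 → walkWeight w q δ ≤ δ • r)
    (p : ℕ → V) (n : ℕ) :
    walkWeight w p n ≤ n • r + Fintype.card V • c := by
  induction n using Nat.strong_induction_on generalizing p with
  | _ n ih =>
  by_cases hn : n ≤ Fintype.card V
  · calc walkWeight w p n ≤ ∑ _k ∈ range n, (r + c) := Finset.sum_le_sum fun k _ => hw _ _
      _ = n • r + n • c := by rw [Finset.sum_const, card_range, nsmul_add]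
      _ ≤ n • r + Fintype.card V • c := add_le_add_right (nsmul_le_nsmul_left hc hn) _
  · obtain ⟨a, δ, hδ, haδ, hpa⟩ := exists_closed_subwalk p
    obtain ⟨m, rfl⟩ : ∃ m, n = a + δ + m := ⟨n - (a + δ), by omega⟩
    rw [walkWeight_splice w p hpa]
    calc _ ≤ ((a + m) • r + Fintype.card V • c) + δ • r :=
          add_le_add (ih _ (by omega) _) (hclosed _ δ hδ (by simpa using hpa.symm))
      _ = (a + δ + m) • r + Fintype.card V • c := by simp only [add_nsmul]; abel

end Walks

section SpectralRadius

variable {d : ℕ}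

lemma le_tnorm (M : Mat d) (i j : Fin d) : M i j ≤ tnorm M :=
  (Finset.le_sup (f := fun j => M i j) (mem_univ j)).trans
    (Finset.le_sup (f := fun i => univ.sup fun j => M i j) (mem_univ i))

lemma z2e_tnorm_le {M : Mat d} {x : EReal} (h : ∀ i j, z2e (M i j) ≤ x) : z2e (tnorm M) ≤ x := by
  rw [tnorm, z2e_finset_sup]
  exact Finset.sup_le fun i _ => by
    rw [Function.comp_apply, z2e_finset_sup]
    exact Finset.sup_le fun j _ => h i j

lemma z2e_walkWeight (M : Mat d) (p : ℕ → Fin d) (n : ℕ) :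
    z2e (walkWeight M p n) = walkWeight (fun i j => z2e (M i j)) p n :=
  z2e_sum _ _

lemma exists_walk_tpow_le (M : Mat d) (n : ℕ) (i j : Fin d) :
    ∃ p : ℕ → Fin d, p 0 = i ∧ tpow M n i j ≤ walkWeight M p n := by
  induction n generalizing i with
  | zero => exact ⟨fun _ => i, rfl, by by_cases h : i = j <;> simp [tpow, tId, walkWeight, h]⟩
  | succ n ih =>
    obtain ⟨k, -, hk⟩ := Finset.exists_mem_eq_sup univ ⟨i, mem_univ i⟩
      fun k => M i k + tpow M n k j
    obtain ⟨p, hp0, hp⟩ := ih k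
    refine ⟨fun | 0 => i | t + 1 => p t, rfl, ?_⟩
    rw [walkWeight_succ']
    calc tpow M (n + 1) i j = M i k + tpow M n k j := hk
      _ ≤ M i (p 0) + walkWeight M p n := by rw [hp0]; exact add_le_add_right hp _

lemma cycWeight_eq_walkWeight (M : Mat d) (q : ℕ → Fin d) {ℓ : ℕ} (hq : q (ℓ + 1) = q 0) :
    cycWeight M (fun k : Fin (ℓ + 1) => q k) = walkWeight M q (ℓ + 1) := by
  rw [cycWeight, walkWeight, ← Fin.sum_univ_eq_sum_range (fun k => M (q k) (q (k + 1)))]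
  refine Finset.sum_congr rfl fun k _ => ?_
  rw [Fin.val_add_one]
  split_ifs with h
  · rw [h, Fin.val_last, hq]
  · rfl

lemma natCast_ereal_pos {n : ℕ} (hn : 0 < n) : (0 : EReal) < n := by
  exact_mod_cast hn

lemma walkWeight_le_of_rho_le {M : Mat d} {r : ℝ} (h : rho M ≤ r) (q : ℕ → Fin d) {δ : ℕ}
    (hδ : 0 < δ) (hq : q δ = q 0) :
    walkWeight (fun i j => z2e (M i j)) q δ ≤ δ • (r : EReal) := by
  obtain ⟨ℓ, rfl⟩ : ∃ ℓ, δ = ℓ + 1 := ⟨δ - 1, by omega⟩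
  have hcyc := (le_iSup₂ (f := fun ℓ (c : Fin (ℓ + 1) → Fin d) =>
    z2e (cycWeight M c) / ((ℓ + 1 : ℕ) : EReal)) ℓ fun k => q k).trans h
  rw [EReal.div_le_iff_le_mul (natCast_ereal_pos ℓ.succ_pos) (EReal.natCast_ne_top _),
    cycWeight_eq_walkWeight M q hq, z2e_walkWeight, ← EReal.nsmul_eq_mul] at hcyc
  exact hcyc

theorem exists_tnorm_tpow_le_of_rho_le {M : Mat d} {r : ℝ} (h : rho M ≤ r) :
    ∃ K : ℝ, ∀ n, z2e (tnorm (tpow M n)) ≤ ((n * r + K : ℝ) : EReal) := by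
  set B : ℝ := (((tnorm M).unbotD 0 : ℤ) : ℝ)
  set c : ℝ := max (B - r) 0
  have hedge : ∀ i j, z2e (M i j) ≤ (r : EReal) + c := fun i j => by
    calc z2e (M i j) ≤ z2e (tnorm M) := z2e_mono (le_tnorm M i j)
      _ ≤ B := z2e_le_unbotD _
      _ ≤ (r : EReal) + c := by
        rw [← EReal.coe_add, EReal.coe_le_coe_iff]
        linarith [le_max_left (B - r) 0]
  have hwalk := walkWeight_le_of_closed (EReal.coe_nonneg.mpr (le_max_right (B - r) 0)) hedge
    fun q δ hδ hq => walkWeight_le_of_rho_le h q hδ hq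
  refine ⟨d * c, fun n => z2e_tnorm_le fun i j => ?_⟩
  obtain ⟨p, -, hp⟩ := exists_walk_tpow_le M n i j
  calc z2e (tpow M n i j) ≤ z2e (walkWeight M p n) := z2e_mono hp
    _ ≤ n • (r : EReal) + d • (c : EReal) := by
      simpa only [z2e_walkWeight, Fintype.card_fin] using hwalk p n
    _ = ((n * r + d * c : ℝ) : EReal) := by
      rw [← EReal.coe_nsmul, ← EReal.coe_nsmul, ← EReal.coe_add, nsmul_eq_mul, nsmul_eq_mul]

lemma rho_le_tnorm (M : Mat d) : rho M ≤ z2e (tnorm M) := by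
  refine iSup₂_le fun ℓ c => ?_
  rw [EReal.div_le_iff_le_mul (natCast_ereal_pos ℓ.succ_pos) (EReal.natCast_ne_top _),
    ← EReal.nsmul_eq_mul]
  refine (z2e_mono ?_).trans_eq (map_nsmul z2eHom _ _)
  calc cycWeight M c ≤ ∑ _k : Fin (ℓ + 1), tnorm M := Finset.sum_le_sum fun k _ => le_tnorm M _ _
    _ = (ℓ + 1) • tnorm M := by simp

end SpectralRadius

section JointSpectralRadius

variable {d : ℕ} {Γ : Set (Mat d)} {L : List (Mat d)}

lemma jsr_le_tnorm_div (hL : L ≠ []) (hΓ : ∀ N ∈ L, N ∈ Γ) :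
    jsr Γ ≤ z2e (tnorm (prodL L)) / (L.length : EReal) :=
  (iInf₂_le L.length (List.length_pos_of_ne_nil hL)).trans (sInf_le ⟨L, rfl, hΓ, rfl⟩)

lemma jsr_le_tnorm_tpow_div (hL : L ≠ []) (hΓ : ∀ N ∈ L, N ∈ Γ) {n : ℕ} (hn : 0 < n) :
    jsr Γ ≤ z2e (tnorm (tpow (prodL L) n)) / ((n * L.length : ℕ) : EReal) := by
  have hlen : ((List.replicate n L).flatten).length = n * L.length := by
    simp [List.length_flatten, List.sum_replicate]
  have hne : (List.replicate n L).flatten ≠ [] := by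
    rw [← List.length_pos_iff, hlen]
    exact Nat.mul_pos hn (List.length_pos_of_ne_nil hL)
  have hmem : ∀ N ∈ (List.replicate n L).flatten, N ∈ Γ := by
    simp only [List.mem_flatten, List.mem_replicate]
    rintro N ⟨_, ⟨-, rfl⟩, hN⟩
    exact hΓ N hN
  simpa only [prodL_flatten_replicate hL hn, hlen] using jsr_le_tnorm_div hne hmem

lemma jsr_le_of_rho_le (hL : L ≠ []) (hΓ : ∀ N ∈ L, N ∈ Γ) {r : ℝ} (h : rho (prodL L) ≤ r) :
    jsr Γ ≤ ((r / L.length : ℝ) : EReal) := by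
  set ℓ := L.length
  obtain ⟨K, hK⟩ := exists_tnorm_tpow_le_of_rho_le h
  have hbound : ∀ n : ℕ, 0 < n → jsr Γ ≤ ((r / ℓ + K / ℓ / n : ℝ) : EReal) := fun n hn => by
    calc jsr Γ ≤ z2e (tnorm (tpow (prodL L) n)) / ((n * ℓ : ℕ) : EReal) :=
          jsr_le_tnorm_tpow_div hL hΓ hn
      _ ≤ ((n * r + K : ℝ) : EReal) / ((n * ℓ : ℕ) : EReal) :=
          EReal.div_le_div_right_of_nonneg (Nat.cast_nonneg' _) (hK n)
      _ = ((r / ℓ + K / ℓ / n : ℝ) : EReal) := by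
        rw [← EReal.coe_coe_eq_natCast, ← EReal.coe_div]
        congr 1
        push_cast
        field_simp
  have hlim : Tendsto (fun n : ℕ => r / ℓ + K / ℓ / n) atTop (nhds (r / ℓ)) := by
    simpa using tendsto_const_nhds.add (tendsto_const_div_atTop_nhds_zero_nat (K / ℓ))
  exact ge_of_tendsto (EReal.tendsto_coe.mpr hlim)
    ((eventually_gt_atTop 0).mono hbound)

lemma jsr_le_rho_div (hL : L ≠ []) (hΓ : ∀ N ∈ L, N ∈ Γ) :
    jsr Γ ≤ rho (prodL L) / (L.length : EReal) := by
  have hℓ := natCast_ereal_pos (List.length_pos_of_ne_nil hL)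
  refine EReal.le_of_forall_lt_iff_le.mp fun z hz => ?_
  rw [EReal.div_lt_iff hℓ (EReal.natCast_ne_top _)] at hz
  have hℓ' : (L.length : ℝ) ≠ 0 := by exact_mod_cast (List.length_pos_of_ne_nil hL).ne'
  simpa [hℓ'] using jsr_le_of_rho_le hL hΓ (r := z * L.length) (by simpa using hz.le)

end JointSpectralRadius

theorem stmt_5_general {d : ℕ} (Γ : Set (Mat d)) :
    jsr Γ = ⨅ (ℓ : ℕ) (_ : 0 < ℓ),
      sInf {x : EReal | ∃ L : List (Mat d), L.length = ℓ ∧ (∀ N ∈ L, N ∈ Γ) ∧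
        x = rho (prodL L) / (ℓ : EReal)} := by
  refine le_antisymm (le_iInf₂ fun ℓ hℓ => le_sInf ?_) (iInf₂_mono fun ℓ _ => ?_)
  · rintro _ ⟨L, rfl, hΓ, rfl⟩
    exact jsr_le_rho_div (List.ne_nil_of_length_pos hℓ) hΓ
  · refine sInf_le_sInf_of_isCoinitialFor ?_
    rintro _ ⟨L, hlen, hΓ, rfl⟩
    exact ⟨_, ⟨L, hlen, hΓ, rfl⟩,
      EReal.div_le_div_right_of_nonneg (Nat.cast_nonneg' _) (rho_le_tnorm _)⟩

theorem stmt_5 {d : ℕ} (Γ : Set (Mat d)) (hfin : Γ.Finite) (hne : Γ.Nonempty) :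
    jsr Γ = ⨅ (ℓ : ℕ) (_ : 0 < ℓ),
      sInf {x : EReal | ∃ L : List (Mat d), L.length = ℓ ∧ (∀ N ∈ L, N ∈ Γ) ∧
        x = rho (prodL L) / (ℓ : EReal)} :=
  stmt_5_general Γ
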